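/- arXiv:2409.06581 — 2 statements merged into one kernel-verified Lean document; each statement's English description precedes it below -/
import Mathlib

section
/- Let ω be a uniformly elliptic nearest-neighbor environment on ℤ^d with ellipticity constant κ. Suppose that for every u > 0 there exists a continuous function G̃_u : ℝ^d → ℝ such that for every η ∈ ℝ^d and every sequence (y_N)_{N≥1} in ℤ^d with y_N/N → η, one has (1/N) · G_{u,ω}(N, 0, y_N) → G̃_u(η) as N → ∞. Define I : ℝ^d → (−∞, +∞] by I(x) := sup_{u>0} G̃_u(x). Then for every closed set F ⊆ ℝ^d, limsup_{N→∞} (1/N) · log P_{0,ω}(X_N/N ∈ F) ≤ − inf_{x∈F} I(x), with the conventions log 0 = −∞ and inf over the empty set = +∞. -/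
open Filter

/-- The set of the `2d` unit vectors of `ℤ^d`. -/
def unitVecs (d : ℕ) : Finset (Fin d → ℤ) :=
  (Finset.univ.image fun i : Fin d => fun j => if j = i then (1 : ℤ) else 0) ∪
  (Finset.univ.image fun i : Fin d => fun j => if j = i then (-1 : ℤ) else 0)

/-- Quenched `n`-step transition probabilities of the random walk in environment `ω`. -/
noncomputable def qtp (d : ℕ) (ω : (Fin d → ℤ) → (Fin d → ℤ) → ℝ) :
    ℕ → (Fin d → ℤ) → (Fin d → ℤ) → ℝ
  | 0, x, y => if x = y then 1 else 0
  | n + 1, x, y => ∑ e ∈ unitVecs d, ω x e * qtp d ω n (x + e) y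

/-- `G_{u,ω}(t,x,y) := - log sup_n { e^{-u |n - t|} p_n(x,y) }`. -/
noncomputable def Gfun (d : ℕ) (ω : (Fin d → ℤ) → (Fin d → ℤ) → ℝ)
    (u t : ℝ) (x y : Fin d → ℤ) : ℝ :=
  - Real.log (⨆ n : ℕ, Real.exp (-u * |(n : ℝ) - t|) * qtp d ω n x y)

/-- `P_{0,ω}(X_N/N ∈ A) := ∑_{z : z/N ∈ A} p_N(0,z)`. -/
noncomputable def probQ (d : ℕ) (ω : (Fin d → ℤ) → (Fin d → ℤ) → ℝ)
    (N : ℕ) (A : Set (Fin d → ℝ)) : ℝ :=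
  ∑' z : Fin d → ℤ, A.indicator (fun _ => qtp d ω N 0 z) (fun i => (z i : ℝ) / (N : ℝ))

/-- Extended-real logarithm, with the convention `log x = -∞` for `x ≤ 0`. -/
noncomputable def elog (x : ℝ) : EReal := if x ≤ 0 then ⊥ else ((Real.log x : ℝ) : EReal)

open Topology

/-!
Since `p_N(0,z)` is one of the terms in the supremum defining `G_u`, we have
`p_N(0,z) ≤ exp (-G_u(N,0,z))`. The sequential hypothesis upgrades to a locally uniform one:
if `c < G̃_u(x)` then `G_u(N,0,z) ≥ N c` for all large `N` and all `z` with `z/N` near `x`.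
The walk stays in `[-1,1]^d` after rescaling, so by compactness of `F ∩ [-1,1]^d` we get
`p_N(0,z) ≤ exp (-N c)` uniformly in `z/N ∈ F` whenever `c < inf_F I`; summing over the
`(2N+1)^d` reachable sites costs only a polynomial factor.
-/

lemma exists_mem_nhds_eventually_forall_of_forall_tendsto {α X : Type*} [TopologicalSpace X]
    [FirstCountableTopology X] {s : ℕ → α → X} {x : X} {g : ℕ → α}
    (hg : Tendsto (fun N => s N (g N)) atTop (𝓝 x)) {P : ℕ → α → Prop}
    (hP : ∀ y : ℕ → α, Tendsto (fun N => s N (y N)) atTop (𝓝 x) → ∀ᶠ N in atTop, P N (y N)) :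
    ∃ U ∈ 𝓝 x, ∀ᶠ N in atTop, ∀ a, s N a ∈ U → P N a := by
  obtain ⟨V, hV⟩ := (𝓝 x).exists_antitone_basis
  by_contra! hbad
  have hfreq : ∀ n, ∃ᶠ N in atTop, ∃ a, s N a ∈ V n ∧ ¬P N a := fun n => by
    simpa [not_eventually] using hbad (V n) (hV.mem n)
  obtain ⟨φ, hφ, hφbad⟩ := extraction_forall_of_frequently hfreq
  choose a haV haP using hφbad
  -- `y` runs through the bad points along `φ` and follows `g` elsewhere.
  set y := Function.extend φ a g
  have hyφ : ∀ n, y (φ n) = a n := hφ.injective.extend_apply a g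
  have hy : Tendsto (fun N => s N (y N)) atTop (𝓝 x) := by
    refine hV.1.tendsto_right_iff.2 fun n _ => ?_
    filter_upwards [hg (hV.mem n), eventually_ge_atTop (φ n)] with N hgN hN
    by_cases hNφ : ∃ m, φ m = N
    · obtain ⟨m, rfl⟩ := hNφ
      rw [hyφ]
      exact hV.antitone (hφ.le_iff_le.1 hN) (haV m)
    · rw [show y N = g N from Function.extend_apply' _ _ _ hNφ]
      exact hgN
  obtain ⟨n, hn⟩ := (hφ.tendsto_atTop.eventually (hP y hy)).exists
  exact haP n (hyφ n ▸ hn)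

lemma IsCompact.eventually_forall_of_forall_exists_mem_nhds {X α ι : Type*} [TopologicalSpace X]
    {K : Set X} (hK : IsCompact K) {l : Filter ι} {s : ι → α → X} {P : ι → α → Prop}
    (h : ∀ x ∈ K, ∃ U ∈ 𝓝 x, ∀ᶠ N in l, ∀ a, s N a ∈ U → P N a) :
    ∀ᶠ N in l, ∀ a, s N a ∈ K → P N a := by
  refine hK.induction_on (p := fun t => ∀ᶠ N in l, ∀ a, s N a ∈ t → P N a) ?_ ?_ ?_ ?_
  · simp
  · intro t t' htt' ht'
    filter_upwards [ht'] with N hN a ha using hN a (htt' ha)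
  · intro t t' ht ht'
    filter_upwards [ht, ht'] with N hN hN' a ha using ha.elim (hN a) (hN' a)
  · intro x hx
    obtain ⟨U, hU, hUP⟩ := h x hx
    exact ⟨U, mem_nhdsWithin_of_mem_nhds hU, hUP⟩

lemma tendsto_floor_mul_div (a : ℝ) :
    Tendsto (fun N : ℕ => (⌊N * a⌋ : ℝ) / N) atTop (𝓝 a) := by
  have hlow : Tendsto (fun N : ℕ => a - (N : ℝ)⁻¹) atTop (𝓝 a) := by
    simpa using tendsto_const_nhds.sub (tendsto_inv_atTop_nhds_zero_nat (𝕜 := ℝ))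
  refine tendsto_of_tendsto_of_tendsto_of_le_of_le' hlow tendsto_const_nhds ?_ ?_
  all_goals filter_upwards [eventually_gt_atTop 0] with N hN
  all_goals have hN' : (0 : ℝ) < N := by exact_mod_cast hN
  · rw [le_div_iff₀ hN', sub_mul, inv_mul_cancel₀ hN'.ne']
    linarith [Int.sub_one_lt_floor ((N : ℝ) * a)]
  · rw [div_le_iff₀ hN', mul_comm]
    exact Int.floor_le _

lemma elog_le_coe_log {x y : ℝ} (h : x ≤ y) : elog x ≤ (Real.log y : EReal) := by
  unfold elog
  split_ifs with hx
  · exact bot_le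
  · exact EReal.coe_le_coe_iff.2 (Real.log_le_log (not_le.1 hx) h)

lemma limsup_inv_mul_elog_le {a : ℕ → ℝ} (k : ℕ) (c : ℝ)
    (ha : ∀ᶠ N in atTop, a N ≤ (2 * N + 1) ^ k * Real.exp (-(N * c))) :
    limsup (fun N : ℕ => (((N : ℝ)⁻¹ : ℝ) : EReal) * elog (a N)) atTop ≤ ((-c : ℝ) : EReal) := by
  have hlog : Tendsto (fun N : ℕ => k * (Real.log (2 * N + 1) / N) - c) atTop (𝓝 (-c)) := by
    have h2N : Tendsto (fun N : ℕ => (2 * N + 1 : ℝ)) atTop atTop :=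
      tendsto_atTop_add_const_right _ _
        (tendsto_natCast_atTop_atTop.const_mul_atTop two_pos)
    have := ((Real.tendsto_pow_log_div_mul_add_atTop (1 / 2) (-1 / 2) 1 (by norm_num)).comp
      h2N).const_mul (k : ℝ)
    simpa using (this.congr fun N => by simp only [Function.comp, pow_one]; ring_nf).sub_const c
  calc limsup (fun N : ℕ => (((N : ℝ)⁻¹ : ℝ) : EReal) * elog (a N)) atTop
      ≤ limsup (fun N : ℕ => ((k * (Real.log (2 * N + 1) / N) - c : ℝ) : EReal)) atTop := by
        refine limsup_le_limsup ?_
        filter_upwards [ha, eventually_gt_atTop 0] with N hN hN0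
        have hN' : (0 : ℝ) < N := by exact_mod_cast hN0
        have hbound : Real.log ((2 * N + 1) ^ k * Real.exp (-(N * c)))
            = N * (k * (Real.log (2 * N + 1) / N) - c) := by
          rw [Real.log_mul (by positivity) (Real.exp_ne_zero _), Real.log_pow, Real.log_exp]
          field_simp
          ring
        calc (((N : ℝ)⁻¹ : ℝ) : EReal) * elog (a N)
            ≤ (((N : ℝ)⁻¹ : ℝ) : EReal) * (Real.log ((2 * N + 1) ^ k * Real.exp (-(N * c))) : ℝ) :=
              mul_le_mul_of_nonneg_left (elog_le_coe_log hN) (by exact_mod_cast (inv_pos.2 hN').le)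
          _ = ((k * (Real.log (2 * N + 1) / N) - c : ℝ) : EReal) := by
              rw [hbound, ← EReal.coe_mul, inv_mul_cancel_left₀ hN'.ne']
    _ = ((-c : ℝ) : EReal) := (EReal.tendsto_coe.2 hlog).limsup_eq

noncomputable def rescale {d : ℕ} (N : ℕ) (z : Fin d → ℤ) : Fin d → ℝ := fun i => (z i : ℝ) / N

lemma tendsto_rescale_floor {d : ℕ} (x : Fin d → ℝ) :
    Tendsto (fun N : ℕ => rescale N fun i => ⌊N * x i⌋) atTop (𝓝 x) :=
  tendsto_pi_nhds.2 fun i => tendsto_floor_mul_div (x i)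

lemma abs_le_one_of_mem_unitVecs {d : ℕ} {e : Fin d → ℤ} (he : e ∈ unitVecs d) (i : Fin d) :
    |e i| ≤ 1 := by
  simp only [unitVecs, Finset.mem_union, Finset.mem_image, Finset.mem_univ, true_and] at he
  rcases he with ⟨j, rfl⟩ | ⟨j, rfl⟩ <;> by_cases h : i = j <;> simp [h]

section Walk

variable {d : ℕ} {ω : (Fin d → ℤ) → (Fin d → ℤ) → ℝ}

lemma qtp_nonneg (hω : ∀ x, ∀ e ∈ unitVecs d, 0 ≤ ω x e) (n : ℕ) (x y : Fin d → ℤ) :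
    0 ≤ qtp d ω n x y := by
  induction n generalizing x with
  | zero => unfold qtp; split_ifs <;> norm_num
  | succ n ih => exact Finset.sum_nonneg fun e he => mul_nonneg (hω x e he) (ih _)

lemma qtp_le_one (hω : ∀ x, ∀ e ∈ unitVecs d, 0 ≤ ω x e)
    (hsum : ∀ x, ∑ e ∈ unitVecs d, ω x e = 1) (n : ℕ) (x y : Fin d → ℤ) :
    qtp d ω n x y ≤ 1 := by
  induction n generalizing x with
  | zero => unfold qtp; split_ifs <;> norm_num
  | succ n ih =>
    calc qtp d ω (n + 1) x y ≤ ∑ e ∈ unitVecs d, ω x e * 1 :=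
          Finset.sum_le_sum fun e he => mul_le_mul_of_nonneg_left (ih _) (hω x e he)
      _ = 1 := by simp [hsum x]

lemma abs_sub_le_of_qtp_ne_zero {n : ℕ} {x y : Fin d → ℤ} (h : qtp d ω n x y ≠ 0) (i : Fin d) :
    |y i - x i| ≤ n := by
  induction n generalizing x with
  | zero =>
    unfold qtp at h
    split_ifs at h with hxy
    · simp [hxy]
    · exact absurd rfl h
  | succ n ih =>
    obtain ⟨e, he, hne⟩ := Finset.exists_ne_zero_of_sum_ne_zero h
    have hstep := ih (right_ne_zero_of_mul hne)
    calc |y i - x i| ≤ |y i - (x + e) i| + |(x + e) i - x i| := abs_sub_le _ _ _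
      _ ≤ n + 1 := by
        simp only [Pi.add_apply, add_sub_cancel_left] at hstep ⊢
        linarith [abs_le_one_of_mem_unitVecs he i]
      _ = (n + 1 : ℕ) := by push_cast; ring

lemma rescale_mem_closedBall_of_qtp_ne_zero {N : ℕ} {z : Fin d → ℤ} (h : qtp d ω N 0 z ≠ 0) :
    rescale N z ∈ Metric.closedBall 0 1 := by
  refine mem_closedBall_zero_iff.2 ((pi_norm_le_iff_of_nonneg zero_le_one).2 fun i => ?_)
  have hz : |(z i : ℝ)| ≤ N := by exact_mod_cast (by simpa using abs_sub_le_of_qtp_ne_zero h i)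
  simpa [rescale, abs_div] using div_le_one_of_le₀ hz N.cast_nonneg

lemma qtp_le_exp_neg_Gfun (hω : ∀ x, ∀ e ∈ unitVecs d, 0 ≤ ω x e)
    (hsum : ∀ x, ∑ e ∈ unitVecs d, ω x e = 1) {u : ℝ} (hu : 0 ≤ u) (N : ℕ) (x y : Fin d → ℤ) :
    qtp d ω N x y ≤ Real.exp (-Gfun d ω u N x y) := by
  set f := fun n : ℕ => Real.exp (-u * |(n : ℝ) - N|) * qtp d ω n x y
  have hbdd : BddAbove (Set.range f) := by
    refine ⟨1, Set.forall_mem_range.2 fun n => ?_⟩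
    have hexp : Real.exp (-u * |(n : ℝ) - N|) ≤ 1 :=
      Real.exp_le_one_iff.2 (mul_nonpos_of_nonpos_of_nonneg (neg_nonpos.2 hu) (abs_nonneg _))
    exact mul_le_one₀ hexp (qtp_nonneg hω n x y) (qtp_le_one hω hsum n x y)
  have hN : qtp d ω N x y ≤ ⨆ n, f n := by simpa [f] using le_ciSup hbdd N
  rcases (qtp_nonneg hω N x y).eq_or_lt with h0 | h0
  · exact h0 ▸ (Real.exp_pos _).le
  · rwa [Gfun, neg_neg, Real.exp_log (h0.trans_le hN)]

lemma probQ_le_of_forall_le {F : Set (Fin d → ℝ)} {N : ℕ} {b : ℝ} (hb : 0 ≤ b)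
    (h : ∀ z, rescale N z ∈ F ∩ Metric.closedBall 0 1 → qtp d ω N 0 z ≤ b) :
    probQ d ω N F ≤ (2 * N + 1) ^ d * b := by
  set B := Fintype.piFinset fun _ : Fin d => Finset.Icc (-(N : ℤ)) N
  have hterm : ∀ z, F.indicator (fun _ => qtp d ω N 0 z) (rescale N z) ≤ b := by
    intro z
    by_cases hq : qtp d ω N 0 z = 0
    · simpa [Set.indicator_apply, hq] using hb
    by_cases hzF : rescale N z ∈ F
    · rw [Set.indicator_of_mem hzF]
      exact h z ⟨hzF, rescale_mem_closedBall_of_qtp_ne_zero hq⟩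
    · rw [Set.indicator_of_notMem hzF]
      exact hb
  have hsupp : ∀ z ∉ B, F.indicator (fun _ => qtp d ω N 0 z) (rescale N z) = 0 := by
    intro z hz
    suffices hq : qtp d ω N 0 z = 0 by simp [hq]
    by_contra hq
    refine hz (Fintype.mem_piFinset.2 fun i => Finset.mem_Icc.2 (abs_le.1 ?_))
    simpa using abs_sub_le_of_qtp_ne_zero hq i
  have hcard : (B.card : ℝ) = (2 * N + 1) ^ d := by
    rw [Fintype.card_piFinset, Finset.prod_const, Int.card_Icc, Finset.card_univ,
      Fintype.card_fin, show ((N : ℤ) + 1 - -N).toNat = 2 * N + 1 by omega]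
    push_cast
    ring
  calc probQ d ω N F = ∑ z ∈ B, F.indicator (fun _ => qtp d ω N 0 z) (rescale N z) :=
        tsum_eq_sum hsupp
    _ ≤ B.card • b := Finset.sum_le_card_nsmul _ _ _ fun z _ => hterm z
    _ = (2 * N + 1) ^ d * b := by rw [nsmul_eq_mul, hcard]

lemma exists_mem_nhds_eventually_qtp_le (hω : ∀ x, ∀ e ∈ unitVecs d, 0 ≤ ω x e)
    (hsum : ∀ x, ∑ e ∈ unitVecs d, ω x e = 1) {u L c : ℝ} (hu : 0 ≤ u) {x : Fin d → ℝ}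
    (hG : ∀ y : ℕ → Fin d → ℤ, Tendsto (fun N => rescale N (y N)) atTop (𝓝 x) →
      Tendsto (fun N : ℕ => (N : ℝ)⁻¹ * Gfun d ω u N 0 (y N)) atTop (𝓝 L))
    (hc : c < L) :
    ∃ U ∈ 𝓝 x, ∀ᶠ N in atTop, ∀ z, rescale N z ∈ U → qtp d ω N 0 z ≤ Real.exp (-(N * c)) := by
  obtain ⟨U, hU, hUG⟩ := exists_mem_nhds_eventually_forall_of_forall_tendsto
    (tendsto_rescale_floor x) (P := fun N z => c < (N : ℝ)⁻¹ * Gfun d ω u N 0 z)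
    fun y hy => (hG y hy).eventually (eventually_gt_nhds hc)
  refine ⟨U, hU, ?_⟩
  filter_upwards [hUG, eventually_gt_atTop 0] with N hN hN0 z hz
  have hN' : (0 : ℝ) < N := by exact_mod_cast hN0
  have hcG : N * c ≤ Gfun d ω u N 0 z := ((lt_inv_mul_iff₀ hN').1 (hN z hz)).le
  exact (qtp_le_exp_neg_Gfun hω hsum hu N 0 z).trans (Real.exp_le_exp.2 (neg_le_neg hcG))

end Walk

theorem stmt5_general (d : ℕ) (κ : ℝ) (hκ0 : 0 < κ)
    (ω : (Fin d → ℤ) → (Fin d → ℤ) → ℝ)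
    (hell : ∀ x, ∀ e ∈ unitVecs d, κ ≤ ω x e)
    (hsum : ∀ x, ∑ e ∈ unitVecs d, ω x e = 1)
    (Gt : ℝ → (Fin d → ℝ) → ℝ)
    (hGt : ∀ u : ℝ, 0 < u → Continuous (Gt u) ∧
      ∀ (η : Fin d → ℝ) (y : ℕ → Fin d → ℤ),
        Tendsto (fun N : ℕ => fun i => (y N i : ℝ) / (N : ℝ)) atTop (nhds η) →
        Tendsto (fun N : ℕ => (N : ℝ)⁻¹ * Gfun d ω u (N : ℝ) 0 (y N)) atTop
          (nhds (Gt u η)))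
    (F : Set (Fin d → ℝ)) (hF : IsClosed F) :
    Filter.limsup
        (fun N : ℕ => (((N : ℝ)⁻¹ : ℝ) : EReal) * elog (probQ d ω N F)) atTop
      ≤ - ⨅ x ∈ F, ⨆ u : Set.Ioi (0 : ℝ), ((Gt u x : ℝ) : EReal) := by
  have hω : ∀ x, ∀ e ∈ unitVecs d, 0 ≤ ω x e := fun x e he => hκ0.le.trans (hell x e he)
  refine EReal.le_neg.2 (EReal.ge_of_forall_gt_iff_ge.1 fun c hc => ?_)
  rw [EReal.le_neg, ← EReal.coe_neg]
  have hlocal : ∀ x ∈ F ∩ Metric.closedBall 0 1, ∃ U ∈ 𝓝 x, ∀ᶠ N in atTop,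
      ∀ z, rescale N z ∈ U → qtp d ω N 0 z ≤ Real.exp (-(N * c)) := by
    intro x hx
    obtain ⟨⟨u, hu⟩, hcu⟩ := lt_iSup_iff.1 (hc.trans_le (iInf₂_le x hx.1))
    exact exists_mem_nhds_eventually_qtp_le hω hsum (le_of_lt hu) ((hGt u hu).2 x)
      (EReal.coe_lt_coe_iff.1 hcu)
  have hK := ((isCompact_closedBall 0 1).inter_left hF).eventually_forall_of_forall_exists_mem_nhds
    hlocal
  refine limsup_inv_mul_elog_le d c ?_
  filter_upwards [hK] with N hN using probQ_le_of_forall_le (Real.exp_pos _).le hN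

theorem stmt5 (d : ℕ) (hd : 1 ≤ d) (κ : ℝ) (hκ0 : 0 < κ) (hκ1 : κ ≤ 1 / (2 * d))
    (ω : (Fin d → ℤ) → (Fin d → ℤ) → ℝ)
    (hell : ∀ x, ∀ e ∈ unitVecs d, κ ≤ ω x e)
    (hsum : ∀ x, ∑ e ∈ unitVecs d, ω x e = 1)
    (Gt : ℝ → (Fin d → ℝ) → ℝ)
    (hGt : ∀ u : ℝ, 0 < u → Continuous (Gt u) ∧
      ∀ (η : Fin d → ℝ) (y : ℕ → Fin d → ℤ),
        Tendsto (fun N : ℕ => fun i => (y N i : ℝ) / (N : ℝ)) atTop (nhds η) →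
        Tendsto (fun N : ℕ => (N : ℝ)⁻¹ * Gfun d ω u (N : ℝ) 0 (y N)) atTop
          (nhds (Gt u η)))
    (F : Set (Fin d → ℝ)) (hF : IsClosed F) :
    Filter.limsup
        (fun N : ℕ => (((N : ℝ)⁻¹ : ℝ) : EReal) * elog (probQ d ω N F)) atTop
      ≤ - ⨅ x ∈ F, ⨆ u : Set.Ioi (0 : ℝ), ((Gt u x : ℝ) : EReal) :=
  stmt5_general d κ hκ0 ω hell hsum Gt hGt F hF
end

section
/- Let d ≥ 1, let z ∈ ℝ^d satisfy |z|₁ < 1, and let α : 𝕍 → (0, ∞) be a strictly positive function on the set 𝕍 of unit vectors. Then there exists a unique constant C > 0 such that (1/2) · Σ_{e∈𝕍} sqrt( ⟨z,e⟩² + 4·C·α(e)·α(−e) ) = 1. Moreover, setting u(e) := (1/2) · ( ⟨z,e⟩ + sqrt( ⟨z,e⟩² + 4·C·α(e)·α(−e) ) ) for e ∈ 𝕍, one has: u(e) > 0 for every e ∈ 𝕍, Σ_{e∈𝕍} u(e) = 1, and Σ_{e∈𝕍} u(e)·e = z; that is, (u(e))_{e∈𝕍} is a strictly positive probability vector on 𝕍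 whose mean equals z. -/
/-!
Pairing each unit vector `e` with `-e`, the left-hand side `Φ(C)` of the equation for `C` is
continuous and strictly increasing in `C ≥ 0`, with `Φ(0) = |z|₁ < 1` and `Φ(C) → ∞`, so it
takes the value `1` exactly once. Given such `C`, `u(e) = (⟨z,e⟩ + r(e)) / 2` where `r` is even
in `e`, `⟨z,e⟩` is odd, and `r(e) > |⟨z,e⟩|`. Summing over `𝕍` kills odd functions, so
`Σ u = Φ(C) = 1` and `Σ u(e) e = ½ Σ ⟨z,e⟩ e = z`, because `Σ_e e eᵀ = 2 I`.
-/

open Finset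

local notation "⟪" z ", " e "⟫" => ∑ i, z i * ((e i : ℤ) : ℝ)

section UnitVecs

variable {d : ℕ}

lemma unitVecs_eq_image_single :
    unitVecs d = univ.image (fun i => Pi.single i 1) ∪ univ.image (fun i => -Pi.single i 1) := by
  simp only [unitVecs, ← Pi.single_apply, Pi.single_neg]

lemma single_one_injective : Function.Injective fun i : Fin d => (Pi.single i 1 : Fin d → ℤ) := by
  intro i i' h
  simpa [Pi.single_apply, eq_comm] using congrFun h i

lemma single_one_ne_neg_single_one (i i' : Fin d) :
    (Pi.single i 1 : Fin d → ℤ) ≠ -Pi.single i' 1 := by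
  intro h
  have := congrFun h i
  simp only [Pi.single_apply, Pi.neg_apply] at this
  split_ifs at this <;> omega

lemma unitVecs_nonempty (hd : 0 < d) : (unitVecs d).Nonempty :=
  ⟨Pi.single ⟨0, hd⟩ 1, by simp [unitVecs_eq_image_single]⟩

lemma neg_mem_unitVecs {e : Fin d → ℤ} (he : e ∈ unitVecs d) : -e ∈ unitVecs d := by
  simp only [unitVecs_eq_image_single, mem_union, mem_image, mem_univ, true_and] at he ⊢
  rcases he with ⟨i, rfl⟩ | ⟨i, rfl⟩
  · exact Or.inr ⟨i, rfl⟩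
  · exact Or.inl ⟨i, (neg_neg _).symm⟩

lemma sum_unitVecs {M : Type*} [AddCommMonoid M] (g : (Fin d → ℤ) → M) :
    ∑ e ∈ unitVecs d, g e = ∑ i, (g (Pi.single i 1) + g (-Pi.single i 1)) := by
  rw [unitVecs_eq_image_single, sum_union, sum_image (single_one_injective.injOn),
    sum_image fun i _ i' _ h => single_one_injective (neg_injective h), sum_add_distrib]
  simp only [disjoint_left, mem_image, mem_univ, true_and]
  rintro _ ⟨i, rfl⟩ ⟨i', h⟩
  exact single_one_ne_neg_single_one i i' h.symm

lemma sum_unitVecs_comp_neg {M : Type*} [AddCommMonoid M] (f : (Fin d → ℤ) → M) :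
    ∑ e ∈ unitVecs d, f (-e) = ∑ e ∈ unitVecs d, f e :=
  sum_nbij' Neg.neg Neg.neg (fun _ => neg_mem_unitVecs) (fun _ => neg_mem_unitVecs)
    (fun _ _ => neg_neg _) (fun _ _ => neg_neg _) (fun _ _ => rfl)

lemma sum_unitVecs_eq_zero_of_odd {M : Type*} [AddCommGroup M] [IsAddTorsionFree M]
    (f : (Fin d → ℤ) → M) (hf : ∀ e, f (-e) = -f e) : ∑ e ∈ unitVecs d, f e = 0 := by
  have h := sum_unitVecs_comp_neg f
  rwa [sum_congr rfl fun e _ => hf e, sum_neg_distrib, neg_eq_self] at h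

lemma dot_neg (z : Fin d → ℝ) (e : Fin d → ℤ) : ⟪z, -e⟫ = -⟪z, e⟫ := by
  simp [sum_neg_distrib]

lemma dot_single_one (z : Fin d → ℝ) (k : Fin d) : ⟪z, (Pi.single k 1 : Fin d → ℤ)⟫ = z k := by
  simp [Pi.single_apply]

lemma sum_unitVecs_dot (z : Fin d → ℝ) : ∑ e ∈ unitVecs d, ⟪z, e⟫ = 0 :=
  sum_unitVecs_eq_zero_of_odd _ (dot_neg z)

lemma sum_unitVecs_abs_dot (z : Fin d → ℝ) :
    ∑ e ∈ unitVecs d, |⟪z, e⟫| = 2 * ∑ i, |z i| := by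
  simp only [sum_unitVecs, dot_neg, dot_single_one, abs_neg, mul_sum]
  exact sum_congr rfl fun _ _ => (two_mul _).symm

lemma sum_unitVecs_dot_mul_apply (z : Fin d → ℝ) (j : Fin d) :
    ∑ e ∈ unitVecs d, ⟪z, e⟫ * (e j : ℝ) = 2 * z j := by
  rw [sum_unitVecs]
  simp only [dot_neg, dot_single_one]
  simp only [Pi.neg_apply, Int.cast_neg, neg_mul_neg, ← two_mul, ← mul_sum]
  simp [Pi.single_apply]

end UnitVecs

lemma add_sqrt_sq_add_pos {t p : ℝ} (hp : 0 < p) : 0 < t + √(t ^ 2 + p) := by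
  have h : √(t ^ 2) < √(t ^ 2 + p) := Real.sqrt_lt_sqrt (sq_nonneg t) (by linarith)
  rw [Real.sqrt_sq_eq_abs] at h
  linarith [neg_abs_le t]

section SumSqrt

variable {ι : Type*} (s : Finset ι) (t a b : ι → ℝ)

lemma strictMonoOn_sum_sqrt (hs : s.Nonempty) (hab : ∀ e ∈ s, 0 < a e * b e) :
    StrictMonoOn (fun C => ∑ e ∈ s, √(t e ^ 2 + 4 * C * a e * b e)) (Set.Ici 0) := by
  intro C hC C' _ hCC'
  refine sum_lt_sum_of_nonempty hs fun e he => Real.sqrt_lt_sqrt ?_ ?_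
  · nlinarith [sq_nonneg (t e), hab e he, Set.mem_Ici.1 hC]
  · nlinarith [hab e he]

lemma existsUnique_pos_sum_sqrt_eq (hs : s.Nonempty) (hab : ∀ e ∈ s, 0 < a e * b e) {y : ℝ}
    (hy : ∑ e ∈ s, |t e| < y) :
    ∃! C, 0 < C ∧ ∑ e ∈ s, √(t e ^ 2 + 4 * C * a e * b e) = y := by
  set f := fun C => ∑ e ∈ s, √(t e ^ 2 + 4 * C * a e * b e)
  have hf0 : f 0 = ∑ e ∈ s, |t e| := by simp [f, Real.sqrt_sq_eq_abs]
  have hy0 : 0 < y := (sum_nonneg fun e _ => abs_nonneg (t e)).trans_lt hy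
  obtain ⟨e₀, he₀⟩ := hs
  have hab₀ := hab e₀ he₀
  set C₁ := y ^ 2 / (a e₀ * b e₀)
  have hC₁ : 0 < C₁ := by positivity
  have hfC₁ : y < f C₁ := by
    have hC₁ab : C₁ * (a e₀ * b e₀) = y ^ 2 := div_mul_cancel₀ _ hab₀.ne'
    calc y < 2 * y := by linarith
      _ = √((2 * y) ^ 2) := (Real.sqrt_sq (by positivity)).symm
      _ ≤ √(t e₀ ^ 2 + 4 * C₁ * a e₀ * b e₀) :=
          Real.sqrt_le_sqrt (by nlinarith [sq_nonneg (t e₀)])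
      _ ≤ f C₁ := single_le_sum (f := fun e => √(t e ^ 2 + 4 * C₁ * a e * b e))
            (fun _ _ => Real.sqrt_nonneg _) he₀
  have hcont : Continuous f := by fun_prop
  obtain ⟨C, hC, hfC⟩ := intermediate_value_Ioo hC₁.le hcont.continuousOn ⟨hf0 ▸ hy, hfC₁⟩
  refine ⟨C, ⟨hC.1, hfC⟩, fun C' hC' => ?_⟩
  exact (strictMonoOn_sum_sqrt s t a b ⟨e₀, he₀⟩ hab).injOn (Set.mem_Ici.2 hC'.1.le)
    (Set.mem_Ici.2 hC.1.le) (hC'.2.trans hfC.symm)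

end SumSqrt

section Mean

variable {d : ℕ} (z : Fin d → ℝ) (r : (Fin d → ℤ) → ℝ)

lemma sum_unitVecs_half_dot_add :
    ∑ e ∈ unitVecs d, 1 / 2 * (⟪z, e⟫ + r e) = 1 / 2 * ∑ e ∈ unitVecs d, r e := by
  rw [← mul_sum, sum_add_distrib, sum_unitVecs_dot, zero_add]

lemma sum_unitVecs_half_dot_add_mul_apply (hr : ∀ e, r (-e) = r e) (j : Fin d) :
    ∑ e ∈ unitVecs d, 1 / 2 * (⟪z, e⟫ + r e) * (e j : ℝ) = z j := by
  have hodd : ∑ e ∈ unitVecs d, r e * (e j : ℝ) = 0 :=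
    sum_unitVecs_eq_zero_of_odd _ fun e => by simp [hr]
  calc ∑ e ∈ unitVecs d, 1 / 2 * (⟪z, e⟫ + r e) * (e j : ℝ)
      = 1 / 2 * (∑ e ∈ unitVecs d, ⟪z, e⟫ * (e j : ℝ) + ∑ e ∈ unitVecs d, r e * (e j : ℝ)) := by
        rw [← sum_add_distrib, mul_sum]
        exact sum_congr rfl fun _ _ => by ring
    _ = z j := by rw [sum_unitVecs_dot_mul_apply, hodd]; ring

end Mean

lemma sqrt_dot_sq_add_comp_neg {d : ℕ} (z : Fin d → ℝ) (α : (Fin d → ℤ) → ℝ) (C : ℝ)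
    (e : Fin d → ℤ) :
    √(⟪z, -e⟫ ^ 2 + 4 * C * α (-e) * α (- -e)) = √(⟪z, e⟫ ^ 2 + 4 * C * α e * α (-e)) := by
  rw [dot_neg, neg_sq, neg_neg, mul_right_comm _ (α (-e))]

theorem stmt8 (d : ℕ) (hd : 1 ≤ d) (z : Fin d → ℝ) (hz : ∑ i, |z i| < 1)
    (α : (Fin d → ℤ) → ℝ) (hα : ∀ e ∈ unitVecs d, 0 < α e) :
    (∃! C : ℝ, 0 < C ∧
      (1 / 2) * ∑ e ∈ unitVecs d,
        Real.sqrt ((∑ i, z i * (e i : ℝ)) ^ 2 + 4 * C * α e * α (-e)) = 1) ∧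
    (∀ C : ℝ, 0 < C →
      (1 / 2) * ∑ e ∈ unitVecs d,
        Real.sqrt ((∑ i, z i * (e i : ℝ)) ^ 2 + 4 * C * α e * α (-e)) = 1 →
      -- `u(e) > 0` for every unit vector `e`
      (∀ e ∈ unitVecs d,
        0 < (1 / 2) * ((∑ i, z i * (e i : ℝ)) +
          Real.sqrt ((∑ i, z i * (e i : ℝ)) ^ 2 + 4 * C * α e * α (-e)))) ∧
      -- `u` is a probability vector
      (∑ e ∈ unitVecs d, (1 / 2) * ((∑ i, z i * (e i : ℝ)) +
          Real.sqrt ((∑ i, z i * (e i : ℝ)) ^ 2 + 4 * C * α e * α (-e))) = 1) ∧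
      -- the mean of `u` is `z`
      (∀ j : Fin d, ∑ e ∈ unitVecs d, (1 / 2) * ((∑ i, z i * (e i : ℝ)) +
          Real.sqrt ((∑ i, z i * (e i : ℝ)) ^ 2 + 4 * C * α e * α (-e))) * (e j : ℝ)
        = z j)) := by
  have hαα : ∀ e ∈ unitVecs d, 0 < α e * α (-e) :=
    fun e he => mul_pos (hα e he) (hα _ (neg_mem_unitVecs he))
  refine ⟨?_, fun C hC hsum => ⟨fun e he => ?_, ?_, fun j => ?_⟩⟩
  · have hz₂ : ∑ e ∈ unitVecs d, |⟪z, e⟫| < 2 := by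
      rw [sum_unitVecs_abs_dot]
      linarith
    refine (existsUnique_congr fun C => and_congr_right' ?_).2
      (existsUnique_pos_sum_sqrt_eq _ _ α (fun e => α (-e)) (unitVecs_nonempty hd) hαα hz₂)
    constructor <;> intro h <;> linarith
  · refine mul_pos one_half_pos (add_sqrt_sq_add_pos ?_)
    rw [mul_assoc]
    exact mul_pos (by positivity) (hαα e he)
  · rw [sum_unitVecs_half_dot_add, hsum]
  · exact sum_unitVecs_half_dot_add_mul_apply z _ (sqrt_dot_sq_add_comp_neg z α C) j
end
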